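/- arXiv:2502.06967 — 6 statements merged into one kernel-verified Lean document; each statement's English description precedes it below -/
import Mathlib

section
/- Let c > 0 and let x₁ ≤ x₂ and z₁ ≤ z₂ be reals. Define F(x, z) = arctan( x·z / (c · √(c² + x² + z²)) ). Then ∫_{z₁}^{z₂} ∫_{x₁}^{x₂} c · (x² + z² + c²)^(−3/2) dx dz = F(x₂, z₂) − F(x₁, z₂) − F(x₂, z₁) + F(x₁, z₁). -/
/-!
`F(x, z)` is a primitive of the integrand in both variables at once: its `z`-derivative
`∂F/∂z = c x / ((z² + c²) √(c² + x² + z²))` has `x`-derivative `c (x² + z² + c²)^(-3/2)`.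
Two applications of the fundamental theorem of calculus, first in `x` and then in `z`, give the
signed sum of `F` over the corners of the rectangle.
-/

/-- The corner function `F(x, z) = arctan( x·z / (c·√(c² + x² + z²)) )`. -/
noncomputable def solidAngleCorner (c x z : ℝ) : ℝ :=
  Real.arctan (x * z / (c * Real.sqrt (c ^ 2 + x ^ 2 + z ^ 2)))

open Real

lemma rpow_neg_three_halves {t : ℝ} (ht : 0 < t) : t ^ (-(3 : ℝ) / 2) = (t * √t)⁻¹ := by
  rw [show -(3 : ℝ) / 2 = -(1 + 1 / 2) by norm_num, rpow_neg ht.le, rpow_add ht, rpow_one,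
    ← sqrt_eq_rpow]

lemma hasDerivAt_div_mul_sqrt {a : ℝ} (ha : 0 < a) (x : ℝ) :
    HasDerivAt (fun x => x / (a * √(x ^ 2 + a))) ((x ^ 2 + a) ^ (-(3 : ℝ) / 2)) x := by
  have hpos : 0 < x ^ 2 + a := by positivity
  have hsqrt : HasDerivAt (fun x => √(x ^ 2 + a)) (2 * x / (2 * √(x ^ 2 + a))) x :=
    ((hasDerivAt_pow 2 x).add_const a).sqrt hpos.ne' |>.congr_deriv (by ring)
  refine ((hasDerivAt_id' x).div (hsqrt.const_mul a) (by positivity)).congr_deriv ?_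
  have hs : √(x ^ 2 + a) ^ 2 = x ^ 2 + a := sq_sqrt hpos.le
  rw [rpow_neg_three_halves hpos]
  field_simp
  linear_combination x ^ 2 * hs

noncomputable def solidAngleEdge (c x z : ℝ) : ℝ :=
  c * x / ((z ^ 2 + c ^ 2) * √(c ^ 2 + x ^ 2 + z ^ 2))

lemma hasDerivAt_solidAngleEdge_left {c : ℝ} (hc : c ≠ 0) (x z : ℝ) :
    HasDerivAt (fun x => solidAngleEdge c x z)
      (c * (x ^ 2 + z ^ 2 + c ^ 2) ^ (-(3 : ℝ) / 2)) x := by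
  have h := (hasDerivAt_div_mul_sqrt (a := z ^ 2 + c ^ 2) (by positivity) x).const_mul c
  rw [add_assoc]
  refine h.congr_of_eventuallyEq (.of_forall fun y => ?_)
  dsimp only [solidAngleEdge]
  rw [show c ^ 2 + y ^ 2 + z ^ 2 = y ^ 2 + (z ^ 2 + c ^ 2) by ring, mul_div_assoc]

lemma hasDerivAt_solidAngleCorner_right {c : ℝ} (hc : c ≠ 0) (x z : ℝ) :
    HasDerivAt (fun z => solidAngleCorner c x z) (solidAngleEdge c x z) z := by
  have hpos : 0 < c ^ 2 + x ^ 2 + z ^ 2 := by positivity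
  have hsqrt : HasDerivAt (fun z => √(c ^ 2 + x ^ 2 + z ^ 2))
      (2 * z / (2 * √(c ^ 2 + x ^ 2 + z ^ 2))) z :=
    ((hasDerivAt_pow 2 z).const_add _).sqrt hpos.ne' |>.congr_deriv (by ring)
  refine (((hasDerivAt_id' z).const_mul x).div (hsqrt.const_mul c) (by positivity)).arctan
    |>.congr_deriv ?_
  have hs : √(c ^ 2 + x ^ 2 + z ^ 2) ^ 2 = c ^ 2 + x ^ 2 + z ^ 2 := sq_sqrt hpos.le
  rw [solidAngleEdge, Pi.div_apply]
  field_simp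
  linear_combination x * z ^ 2 * hs

lemma continuous_solidAngleEdge_right {c : ℝ} (hc : c ≠ 0) (x : ℝ) :
    Continuous fun z => solidAngleEdge c x z := by
  unfold solidAngleEdge
  fun_prop (disch := intro; positivity)

lemma continuous_solidAngle_integrand {c : ℝ} (hc : c ≠ 0) (z : ℝ) :
    Continuous fun x : ℝ => c * (x ^ 2 + z ^ 2 + c ^ 2) ^ (-(3 : ℝ) / 2) :=
  continuous_const.mul ((by fun_prop : Continuous fun x : ℝ => x ^ 2 + z ^ 2 + c ^ 2).rpow_const
    fun _ => Or.inl (by positivity))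

theorem double_integral_solid_angle_rect_general (c x₁ x₂ z₁ z₂ : ℝ)
    (hc : 0 < c) :
    ∫ z in z₁..z₂, ∫ x in x₁..x₂, c * (x ^ 2 + z ^ 2 + c ^ 2) ^ (-(3 : ℝ) / 2)
      = solidAngleCorner c x₂ z₂ - solidAngleCorner c x₁ z₂
        - solidAngleCorner c x₂ z₁ + solidAngleCorner c x₁ z₁ := by
  have hc₀ : c ≠ 0 := hc.ne'
  have inner (z : ℝ) : ∫ x in x₁..x₂, c * (x ^ 2 + z ^ 2 + c ^ 2) ^ (-(3 : ℝ) / 2)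
      = solidAngleEdge c x₂ z - solidAngleEdge c x₁ z :=
    intervalIntegral.integral_eq_sub_of_hasDerivAt
      (fun x _ => hasDerivAt_solidAngleEdge_left hc₀ x z)
      ((continuous_solidAngle_integrand hc₀ z).intervalIntegrable _ _)
  have outer : ∫ z in z₁..z₂, (solidAngleEdge c x₂ z - solidAngleEdge c x₁ z)
      = (solidAngleCorner c x₂ z₂ - solidAngleCorner c x₁ z₂)
        - (solidAngleCorner c x₂ z₁ - solidAngleCorner c x₁ z₁) :=
    intervalIntegral.integral_eq_sub_of_hasDerivAt
      (fun z _ => (hasDerivAt_solidAngleCorner_right hc₀ x₂ z).sub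
        (hasDerivAt_solidAngleCorner_right hc₀ x₁ z))
      (((continuous_solidAngleEdge_right hc₀ x₂).sub
        (continuous_solidAngleEdge_right hc₀ x₁)).intervalIntegrable _ _)
  simp only [inner, outer]
  ring

/-- General signed-corner rectangle formula for the solid-angle double integral:
for `c > 0`, `x₁ ≤ x₂`, `z₁ ≤ z₂`,
`∫_{z₁}^{z₂} ∫_{x₁}^{x₂} c·(x² + z² + c²)^(−3/2) dx dz
  = F(x₂,z₂) − F(x₁,z₂) − F(x₂,z₁) + F(x₁,z₁)`. -/
theorem double_integral_solid_angle_rect (c x₁ x₂ z₁ z₂ : ℝ)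
    (hc : 0 < c) (hx : x₁ ≤ x₂) (hz : z₁ ≤ z₂) :
    ∫ z in z₁..z₂, ∫ x in x₁..x₂, c * (x ^ 2 + z ^ 2 + c ^ 2) ^ (-(3 : ℝ) / 2)
      = solidAngleCorner c x₂ z₂ - solidAngleCorner c x₁ z₂
        - solidAngleCorner c x₂ z₁ + solidAngleCorner c x₁ z₁ :=
  double_integral_solid_angle_rect_general c x₁ x₂ z₁ z₂ hc
end

section
/- Let H be a complex inner product space, let h, a ∈ H with h ≠ 0, set ρ = ⟪h, a⟫, and let ε ∈ (0, 1) satisfy ε · (‖h‖⁴ + |ρ|²) ≥ ‖h‖⁴. Then ‖h‖²/ε is the greatest element of the set { min( |⟪h, w⟫|²/ε , |⟪a, w⟫|²/(1 − ε) ) : w ∈ H, ‖w‖ ≤ 1 }, and it is attained at w = h / ‖h‖. -/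
open scoped InnerProductSpace

/-!
By Cauchy–Schwarz, `|⟪h, w⟫|² ≤ ‖h‖²` on the unit ball, so the first term of the minimum never
exceeds `‖h‖²/ε`. At `w = h/‖h‖` that term equals `‖h‖²/ε` and the second is `|ρ|²/(‖h‖²(1-ε))`;
the case hypothesis, rewritten as `(1-ε)‖h‖⁴ ≤ ε|ρ|²`, says exactly that the second is not smaller.
-/

section Normalize

variable {𝕜 E : Type*} [RCLike 𝕜] [NormedAddCommGroup E] [InnerProductSpace 𝕜 E]

theorem norm_inner_le_norm_of_norm_le_one (x : E) {w : E} (hw : ‖w‖ ≤ 1) :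
    ‖⟪x, w⟫_𝕜‖ ≤ ‖x‖ :=
  (norm_inner_le_norm x w).trans (mul_le_of_le_one_right (norm_nonneg x) hw)

theorem norm_inv_norm_smul_le_one (h : E) : ‖((‖h‖ : 𝕜))⁻¹ • h‖ ≤ 1 := by
  rw [norm_smul, norm_inv, RCLike.norm_ofReal, abs_norm]
  exact inv_mul_le_one_of_le₀ le_rfl (norm_nonneg h)

theorem norm_inner_inv_norm_smul (x h : E) :
    ‖⟪x, ((‖h‖ : 𝕜))⁻¹ • h⟫_𝕜‖ = ‖⟪x, h⟫_𝕜‖ / ‖h‖ := by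
  rw [inner_smul_right, norm_mul, norm_inv, RCLike.norm_ofReal, abs_norm, inv_mul_eq_div]

theorem norm_inner_inv_norm_smul_self (h : E) : ‖⟪h, ((‖h‖ : 𝕜))⁻¹ • h⟫_𝕜‖ = ‖h‖ := by
  rw [norm_inner_inv_norm_smul, inner_self_eq_norm_sq_to_K, norm_pow, RCLike.norm_ofReal,
    abs_norm, sq, mul_self_div_self]

end Normalize

theorem min_sq_div_eq_left_of_mul_add_ge {g r ε : ℝ} (hε : ε ∈ Set.Ioo (0 : ℝ) 1)
    (hcase : ε * (g ^ 4 + r ^ 2) ≥ g ^ 4) :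
    min (g ^ 2 / ε) ((r / g) ^ 2 / (1 - ε)) = g ^ 2 / ε := by
  obtain ⟨hε0, hε1⟩ := hε
  refine min_eq_left ?_
  rw [div_le_div_iff₀ hε0 (sub_pos.mpr hε1)]
  rcases eq_or_ne g 0 with rfl | hg
  · simp -- both sides vanish, since `r / 0 = 0`
  · rw [div_pow, div_mul_eq_mul_div, le_div_iff₀ (by positivity)]
    linarith

theorem pareto_case_comm_centric_general {H : Type*} [NormedAddCommGroup H]
    [InnerProductSpace ℂ H] (h a : H) (ρ : ℂ) (hρ : ρ = ⟪h, a⟫_ℂ)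
    (ε : ℝ) (hε : ε ∈ Set.Ioo (0 : ℝ) 1)
    (hcase : ε * (‖h‖ ^ 4 + ‖ρ‖ ^ 2) ≥ ‖h‖ ^ 4) :
    IsGreatest {x : ℝ | ∃ w : H, ‖w‖ ≤ 1 ∧
        x = min (‖⟪h, w⟫_ℂ‖ ^ 2 / ε) (‖⟪a, w⟫_ℂ‖ ^ 2 / (1 - ε))} (‖h‖ ^ 2 / ε)
      ∧ min (‖⟪h, ((‖h‖ : ℂ))⁻¹ • h⟫_ℂ‖ ^ 2 / ε)
          (‖⟪a, ((‖h‖ : ℂ))⁻¹ • h⟫_ℂ‖ ^ 2 / (1 - ε)) = ‖h‖ ^ 2 / ε := by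
  have hmrt : min (‖⟪h, ((‖h‖ : ℂ))⁻¹ • h⟫_ℂ‖ ^ 2 / ε)
      (‖⟪a, ((‖h‖ : ℂ))⁻¹ • h⟫_ℂ‖ ^ 2 / (1 - ε)) = ‖h‖ ^ 2 / ε := by
    -- `rw` with the general lemmas fails: on `ℂ` the cast is `Complex.ofReal`, which is
    -- `RCLike.ofReal` only up to unfolding.
    have hh : ‖⟪h, ((‖h‖ : ℂ))⁻¹ • h⟫_ℂ‖ = ‖h‖ := norm_inner_inv_norm_smul_self h
    have ha : ‖⟪a, ((‖h‖ : ℂ))⁻¹ • h⟫_ℂ‖ = ‖⟪a, h⟫_ℂ‖ / ‖h‖ := norm_inner_inv_norm_smul a h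
    rw [hh, ha, norm_inner_symm, ← hρ]
    exact min_sq_div_eq_left_of_mul_add_ge hε hcase
  refine ⟨⟨⟨_, norm_inv_norm_smul_le_one h, hmrt.symm⟩, ?_⟩, hmrt⟩
  rintro _ ⟨w, hw, rfl⟩
  have hhw := norm_inner_le_norm_of_norm_le_one (𝕜 := ℂ) h hw
  calc _ ≤ ‖⟪h, w⟫_ℂ‖ ^ 2 / ε := min_le_left _ _
    _ ≤ ‖h‖ ^ 2 / ε := by gcongr; exact hε.1.le

/-- First case of Lemma 2 of the paper: if `ε·(‖h‖⁴ + |ρ|²) ≥ ‖h‖⁴` (with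
`ρ = ⟪h, a⟫`), then `‖h‖²/ε` is the greatest element of the set of values
`min(|⟪h,w⟫|²/ε, |⟪a,w⟫|²/(1−ε))` over `‖w‖ ≤ 1`, attained at the
communications-centric beamformer `w = h/‖h‖`. -/
theorem pareto_case_comm_centric {H : Type*} [NormedAddCommGroup H]
    [InnerProductSpace ℂ H] (h a : H) (hh : h ≠ 0) (ρ : ℂ) (hρ : ρ = ⟪h, a⟫_ℂ)
    (ε : ℝ) (hε : ε ∈ Set.Ioo (0 : ℝ) 1)
    (hcase : ε * (‖h‖ ^ 4 + ‖ρ‖ ^ 2) ≥ ‖h‖ ^ 4) :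
    IsGreatest {x : ℝ | ∃ w : H, ‖w‖ ≤ 1 ∧
        x = min (‖⟪h, w⟫_ℂ‖ ^ 2 / ε) (‖⟪a, w⟫_ℂ‖ ^ 2 / (1 - ε))} (‖h‖ ^ 2 / ε)
      ∧ min (‖⟪h, ((‖h‖ : ℂ))⁻¹ • h⟫_ℂ‖ ^ 2 / ε)
          (‖⟪a, ((‖h‖ : ℂ))⁻¹ • h⟫_ℂ‖ ^ 2 / (1 - ε)) = ‖h‖ ^ 2 / ε :=
  pareto_case_comm_centric_general h a ρ hρ ε hε hcase
end

section
/- Let H be a complex inner product space, let h, a ∈ H with a ≠ 0, set ρ = ⟪h, a⟫, and let ε ∈ (0, 1) satisfy ε · (|ρ|² + ‖a‖⁴) ≤ |ρ|². Then ‖a‖²/(1 − ε) is the greatest element of the set { min( |⟪h, w⟫|²/ε , |⟪a, w⟫|²/(1 − ε) ) : w ∈ H, ‖w‖ ≤ 1 }, and it is attained at w = a / ‖a‖. -/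
/-!
By Cauchy–Schwarz, `‖⟪a, w⟫‖² ≤ ‖a‖²` for every `‖w‖ ≤ 1`, so the second term of the minimum,
and hence the minimum, never exceeds `‖a‖² / (1 - ε)`. At `w = a / ‖a‖` the second term equals
this bound, while the first is `‖ρ‖² / (ε ‖a‖²)`; the case hypothesis, rewritten as
`ε ‖a‖⁴ ≤ (1 - ε) ‖ρ‖²`, says exactly that the first term is the larger one.
-/

open scoped InnerProductSpace

section Complex

variable {E : Type*} [NormedAddCommGroup E] [InnerProductSpace ℂ E]

theorem norm_inner_smul_inv_norm_right (x a : E) :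
    ‖⟪x, ((‖a‖ : ℂ))⁻¹ • a⟫_ℂ‖ = ‖⟪x, a⟫_ℂ‖ / ‖a‖ := by
  rw [inner_smul_right, norm_mul, norm_inv, Complex.norm_real, norm_norm, inv_mul_eq_div]

theorem norm_inner_self_smul_inv_norm_right (a : E) :
    ‖⟪a, ((‖a‖ : ℂ))⁻¹ • a⟫_ℂ‖ = ‖a‖ := by
  rw [norm_inner_smul_inv_norm_right, inner_self_eq_norm_sq_to_K, norm_pow, RCLike.norm_ofReal,
    abs_norm, sq, mul_self_div_self]

theorem norm_smul_inv_norm_le_one (a : E) : ‖((‖a‖ : ℂ))⁻¹ • a‖ ≤ 1 := by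
  rw [norm_smul, norm_inv, Complex.norm_real, norm_norm]
  exact inv_mul_le_one_of_le₀ le_rfl (norm_nonneg a)

end Complex

section InnerProductSpace

variable {𝕜 E : Type*} [RCLike 𝕜] [NormedAddCommGroup E] [InnerProductSpace 𝕜 E]

theorem norm_inner_sq_le_norm_sq_of_norm_le_one (a : E) {w : E} (hw : ‖w‖ ≤ 1) :
    ‖⟪a, w⟫_𝕜‖ ^ 2 ≤ ‖a‖ ^ 2 := by
  have : ‖⟪a, w⟫_𝕜‖ ≤ ‖a‖ :=
    (norm_inner_le_norm a w).trans (mul_le_of_le_one_right (norm_nonneg a) hw)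
  gcongr

end InnerProductSpace

theorem sq_div_one_sub_le_sq_div_of_mul_add_le {ε r t : ℝ} (hε0 : 0 < ε) (hε1 : ε < 1)
    (h : ε * (r ^ 2 + t ^ 4) ≤ r ^ 2) : t ^ 2 / (1 - ε) ≤ (r / t) ^ 2 / ε := by
  rcases eq_or_ne t 0 with rfl | ht
  · simp
  rw [div_pow, div_le_div_iff₀ (by linarith) hε0, div_mul_eq_mul_div, le_div_iff₀ (by positivity)]
  nlinarith

theorem pareto_case_sensing_centric_general {H : Type*} [NormedAddCommGroup H]
    [InnerProductSpace ℂ H] (h a : H) (ρ : ℂ) (hρ : ρ = ⟪h, a⟫_ℂ)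
    (ε : ℝ) (hε : ε ∈ Set.Ioo (0 : ℝ) 1)
    (hcase : ε * (‖ρ‖ ^ 2 + ‖a‖ ^ 4) ≤ ‖ρ‖ ^ 2) :
    IsGreatest {x : ℝ | ∃ w : H, ‖w‖ ≤ 1 ∧
        x = min (‖⟪h, w⟫_ℂ‖ ^ 2 / ε) (‖⟪a, w⟫_ℂ‖ ^ 2 / (1 - ε))} (‖a‖ ^ 2 / (1 - ε))
      ∧ min (‖⟪h, ((‖a‖ : ℂ))⁻¹ • a⟫_ℂ‖ ^ 2 / ε)
          (‖⟪a, ((‖a‖ : ℂ))⁻¹ • a⟫_ℂ‖ ^ 2 / (1 - ε)) = ‖a‖ ^ 2 / (1 - ε) := by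
  obtain ⟨hε0, hε1⟩ := hε
  have hattain : min (‖⟪h, ((‖a‖ : ℂ))⁻¹ • a⟫_ℂ‖ ^ 2 / ε)
      (‖⟪a, ((‖a‖ : ℂ))⁻¹ • a⟫_ℂ‖ ^ 2 / (1 - ε)) = ‖a‖ ^ 2 / (1 - ε) := by
    rw [norm_inner_self_smul_inv_norm_right, norm_inner_smul_inv_norm_right, ← hρ,
      min_eq_right (sq_div_one_sub_le_sq_div_of_mul_add_le hε0 hε1 hcase)]
  refine ⟨⟨⟨_, norm_smul_inv_norm_le_one a, hattain.symm⟩, ?_⟩, hattain⟩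
  rintro x ⟨w, hw, rfl⟩
  exact (min_le_right _ _).trans <|
    div_le_div_of_nonneg_right (norm_inner_sq_le_norm_sq_of_norm_le_one a hw) (by linarith)

/-- Second case of Lemma 2 of the paper: if `ε·(|ρ|² + ‖a‖⁴) ≤ |ρ|²` (with
`ρ = ⟪h, a⟫`), then `‖a‖²/(1−ε)` is the greatest element of the set of values
`min(|⟪h,w⟫|²/ε, |⟪a,w⟫|²/(1−ε))` over `‖w‖ ≤ 1`, attained at the
sensing-centric beamformer `w = a/‖a‖`. -/
theorem pareto_case_sensing_centric {H : Type*} [NormedAddCommGroup H]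
    [InnerProductSpace ℂ H] (h a : H) (ha : a ≠ 0) (ρ : ℂ) (hρ : ρ = ⟪h, a⟫_ℂ)
    (ε : ℝ) (hε : ε ∈ Set.Ioo (0 : ℝ) 1)
    (hcase : ε * (‖ρ‖ ^ 2 + ‖a‖ ^ 4) ≤ ‖ρ‖ ^ 2) :
    IsGreatest {x : ℝ | ∃ w : H, ‖w‖ ≤ 1 ∧
        x = min (‖⟪h, w⟫_ℂ‖ ^ 2 / ε) (‖⟪a, w⟫_ℂ‖ ^ 2 / (1 - ε))} (‖a‖ ^ 2 / (1 - ε))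
      ∧ min (‖⟪h, ((‖a‖ : ℂ))⁻¹ • a⟫_ℂ‖ ^ 2 / ε)
          (‖⟪a, ((‖a‖ : ℂ))⁻¹ • a⟫_ℂ‖ ^ 2 / (1 - ε)) = ‖a‖ ^ 2 / (1 - ε) :=
  pareto_case_sensing_centric_general h a ρ hρ ε hε hcase
end

section
/- Let H be a complex inner product space, let a, h ∈ H, and let γ ≥ 0 be real. Then for every v ∈ H, |⟪a, v⟫|² ≤ ( ‖a‖² − γ·|⟪h, a⟫|²/(1 + γ·‖h‖²) ) · ( γ·|⟪h, v⟫|² + ‖v‖² ). -/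
/-!
Write `T = 1 + γ • h ⟪h, ·⟫`. The map `J v = (v, √γ ⟪h, v⟫)` into the `L²` product `E × 𝕜`
satisfies `⟪J w, J v⟫ = ⟪T w, v⟫` and `‖J v‖² = ‖v‖² + γ |⟪h, v⟫|²`. For `w = T⁻¹ a`, given by the
Sherman–Morrison formula, this gives `⟪a, v⟫ = ⟪J w, J v⟫` and
`‖J w‖² = ⟪a, T⁻¹ a⟫ = ‖a‖² − γ |⟪h, a⟫|² / (1 + γ ‖h‖²)`, so the bound is the Cauchy–Schwarz
inequality in `E × 𝕜`.
-/

open scoped InnerProductSpace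

section
variable (𝕜 : Type*) {E : Type*} [RCLike 𝕜] [NormedAddCommGroup E] [InnerProductSpace 𝕜 E]

noncomputable def innerGraph (h : E) (γ : ℝ) (x : E) : WithLp 2 (E × 𝕜) :=
  WithLp.toLp 2 (x, (√γ : 𝕜) * ⟪h, x⟫_𝕜)

/-- The inverse of `1 + γ • h ⟪h, ·⟫` applied to `a`. -/
noncomputable def shermanMorrison (h : E) (γ : ℝ) (a : E) : E :=
  a - ((γ / (1 + γ * ‖h‖ ^ 2) : 𝕜) * ⟪h, a⟫_𝕜) • h

variable {𝕜} {h : E} {γ : ℝ}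

theorem norm_innerGraph_sq (hγ : 0 ≤ γ) (x : E) :
    ‖innerGraph 𝕜 h γ x‖ ^ 2 = ‖x‖ ^ 2 + γ * ‖⟪h, x⟫_𝕜‖ ^ 2 := by
  simp only [innerGraph, WithLp.prod_norm_sq_eq_of_L2, WithLp.toLp_fst, WithLp.toLp_snd,
    norm_mul, norm_algebraMap', Real.norm_eq_abs, mul_pow, sq_abs, Real.sq_sqrt hγ]

theorem inner_innerGraph (hγ : 0 ≤ γ) (x y : E) :
    ⟪innerGraph 𝕜 h γ x, innerGraph 𝕜 h γ y⟫_𝕜 = ⟪x + ((γ : 𝕜) * ⟪h, x⟫_𝕜) • h, y⟫_𝕜 := by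
  have hsq : (√γ : 𝕜) * √γ = γ := by
    rw [← RCLike.ofReal_mul, Real.mul_self_sqrt hγ]
  simp only [innerGraph, WithLp.prod_inner_apply, inner_add_left, inner_smul_left, map_mul,
    RCLike.conj_ofReal, inner_conj_symm, RCLike.inner_apply (𝕜 := 𝕜) (_ * _)]
  linear_combination (⟪x, h⟫_𝕜 * ⟪h, y⟫_𝕜) * hsq

theorem shermanMorrison_add_smul (hγ : 0 ≤ γ) (a : E) :
    shermanMorrison 𝕜 h γ a + ((γ : 𝕜) * ⟪h, shermanMorrison 𝕜 h γ a⟫_𝕜) • h = a := by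
  have hD : (1 + γ * ‖h‖ ^ 2 : 𝕜) ≠ 0 := by
    exact_mod_cast (by positivity : (0 : ℝ) < 1 + γ * ‖h‖ ^ 2).ne'
  rw [shermanMorrison, inner_sub_right, inner_smul_right, inner_self_eq_norm_sq_to_K,
    sub_add_eq_add_sub, sub_eq_iff_eq_add, add_right_inj, ← sub_eq_zero, ← sub_smul]
  convert zero_smul 𝕜 h
  field_simp
  ring

theorem inner_shermanMorrison (a : E) :
    ⟪a, shermanMorrison 𝕜 h γ a⟫_𝕜
      = ((‖a‖ ^ 2 - γ * ‖⟪h, a⟫_𝕜‖ ^ 2 / (1 + γ * ‖h‖ ^ 2) : ℝ) : 𝕜) := by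
  rw [shermanMorrison, inner_sub_right, inner_smul_right, inner_self_eq_norm_sq_to_K,
    ← inner_conj_symm a h, mul_assoc, RCLike.mul_conj]
  push_cast
  ring

theorem norm_innerGraph_shermanMorrison_sq (hγ : 0 ≤ γ) (a : E) :
    ‖innerGraph 𝕜 h γ (shermanMorrison 𝕜 h γ a)‖ ^ 2
      = ‖a‖ ^ 2 - γ * ‖⟪h, a⟫_𝕜‖ ^ 2 / (1 + γ * ‖h‖ ^ 2) := by
  apply RCLike.ofReal_injective (K := 𝕜)
  rw [← inner_shermanMorrison, RCLike.ofReal_pow, ← inner_self_eq_norm_sq_to_K,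
    inner_innerGraph hγ, shermanMorrison_add_smul hγ]

theorem norm_inner_sq_le_rankOne_form (hγ : 0 ≤ γ) (a v : E) :
    ‖⟪a, v⟫_𝕜‖ ^ 2
      ≤ (‖a‖ ^ 2 - γ * ‖⟪h, a⟫_𝕜‖ ^ 2 / (1 + γ * ‖h‖ ^ 2)) * (γ * ‖⟪h, v⟫_𝕜‖ ^ 2 + ‖v‖ ^ 2) := by
  set w := shermanMorrison 𝕜 h γ a
  have hav : ⟪a, v⟫_𝕜 = ⟪innerGraph 𝕜 h γ w, innerGraph 𝕜 h γ v⟫_𝕜 := by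
    rw [inner_innerGraph hγ, shermanMorrison_add_smul hγ]
  calc ‖⟪a, v⟫_𝕜‖ ^ 2
      ≤ (‖innerGraph 𝕜 h γ w‖ * ‖innerGraph 𝕜 h γ v‖) ^ 2 := by
        rw [hav]
        gcongr
        exact norm_inner_le_norm _ _
    _ = _ := by
        rw [mul_pow, norm_innerGraph_shermanMorrison_sq hγ, norm_innerGraph_sq hγ, add_comm (‖v‖ ^ 2)]

end

/-- Upper-bound half of Lemma 3 of the paper: for all `v`,
`|⟪a,v⟫|² ≤ (‖a‖² − γ|⟪h,a⟫|²/(1+γ‖h‖²))·(γ|⟪h,v⟫|² + ‖v‖²)`. -/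
theorem rayleigh_quotient_upper_bound {H : Type*} [NormedAddCommGroup H]
    [InnerProductSpace ℂ H] (a h : H) (γ : ℝ) (hγ : 0 ≤ γ) :
    ∀ v : H, ‖⟪a, v⟫_ℂ‖ ^ 2
      ≤ (‖a‖ ^ 2 - γ * ‖⟪h, a⟫_ℂ‖ ^ 2 / (1 + γ * ‖h‖ ^ 2))
          * (γ * ‖⟪h, v⟫_ℂ‖ ^ 2 + ‖v‖ ^ 2) :=
  norm_inner_sq_le_rankOne_form hγ a
end

section
/- Let H be a complex inner product space, let a, h ∈ H with a ≠ 0, and let γ ≥ 0 be real. Set M = ‖a‖² − γ·|⟪h, a⟫|²/(1 + γ·‖h‖²) and v★ = a − (γ·⟪h, a⟫/(1 + γ·‖h‖²))·h. Then M is the greatest element of the set { |⟪a, v⟫|² / (γ·|⟪h, v⟫|² + ‖v‖²) : v ∈ H, v ≠ 0 }, and it is attained at v = v★. -/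
/-!
With `T = I + γ h hᴴ`, the denominator is `⟪T v, v⟫` and `v★ = T⁻¹ a`, so the numerator is
`|⟪T v★, v⟫|²`. Cauchy–Schwarz for the positive definite form `⟪T ·, ·⟫` bounds the quotient by
`⟪T v★, v★⟫ = ⟪a, v★⟫ = M`, with equality at `v = v★`.
-/

open scoped InnerProductSpace ComplexConjugate

lemma mul_add_mul_sq_le_mul {γ : ℝ} (hγ : 0 ≤ γ) (p q r s : ℝ) :
    (p * q + γ * (r * s)) ^ 2 ≤ (γ * r ^ 2 + p ^ 2) * (γ * s ^ 2 + q ^ 2) := by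
  nlinarith [mul_nonneg hγ (sq_nonneg (p * s - q * r))]

section

variable {H : Type*} [NormedAddCommGroup H] [InnerProductSpace ℂ H]

lemma inner_add_smul_inner_left (γ : ℝ) (h x y : H) :
    ⟪x + ((γ : ℂ) * ⟪h, x⟫_ℂ) • h, y⟫_ℂ = ⟪x, y⟫_ℂ + γ * (conj ⟪h, x⟫_ℂ * ⟪h, y⟫_ℂ) := by
  rw [inner_add_left, inner_smul_left, map_mul, Complex.conj_ofReal, mul_assoc]

lemma inner_add_smul_inner_self (γ : ℝ) (h x : H) :
    ⟪x + ((γ : ℂ) * ⟪h, x⟫_ℂ) • h, x⟫_ℂ = ((γ * ‖⟪h, x⟫_ℂ‖ ^ 2 + ‖x‖ ^ 2 : ℝ) : ℂ) := by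
  rw [inner_add_smul_inner_left, inner_self_eq_norm_sq_to_K, RCLike.conj_mul,
    RCLike.ofReal_eq_complex_ofReal]
  push_cast
  ring

lemma norm_inner_add_smul_inner_sq_le {γ : ℝ} (hγ : 0 ≤ γ) (h x y : H) :
    ‖⟪x + ((γ : ℂ) * ⟪h, x⟫_ℂ) • h, y⟫_ℂ‖ ^ 2
      ≤ (γ * ‖⟪h, x⟫_ℂ‖ ^ 2 + ‖x‖ ^ 2) * (γ * ‖⟪h, y⟫_ℂ‖ ^ 2 + ‖y‖ ^ 2) := by
  have hle : ‖⟪x + ((γ : ℂ) * ⟪h, x⟫_ℂ) • h, y⟫_ℂ‖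
      ≤ ‖x‖ * ‖y‖ + γ * (‖⟪h, x⟫_ℂ‖ * ‖⟪h, y⟫_ℂ‖) := by
    rw [inner_add_smul_inner_left]
    calc _ ≤ ‖⟪x, y⟫_ℂ‖ + ‖(γ : ℂ) * (conj ⟪h, x⟫_ℂ * ⟪h, y⟫_ℂ)‖ := norm_add_le _ _
      _ = ‖⟪x, y⟫_ℂ‖ + γ * (‖⟪h, x⟫_ℂ‖ * ‖⟪h, y⟫_ℂ‖) := by
        rw [norm_mul, norm_mul, RCLike.norm_conj, Complex.norm_real, Real.norm_of_nonneg hγ]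
      _ ≤ _ := by gcongr; exact norm_inner_le_norm x y
  calc _ ≤ (‖x‖ * ‖y‖ + γ * (‖⟪h, x⟫_ℂ‖ * ‖⟪h, y⟫_ℂ‖)) ^ 2 := by gcongr
    _ ≤ _ := mul_add_mul_sq_le_mul hγ _ _ _ _

noncomputable def detector (γ : ℝ) (h a : H) : H :=
  a - ((γ : ℂ) * ⟪h, a⟫_ℂ / (1 + (γ : ℂ) * ((‖h‖ : ℂ)) ^ 2)) • h

lemma detector_add_smul_inner {γ : ℝ} (hγ : 0 ≤ γ) (a h : H) :
    detector γ h a + ((γ : ℂ) * ⟪h, detector γ h a⟫_ℂ) • h = a := by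
  have hD : 1 + (γ : ℂ) * ((‖h‖ : ℂ)) ^ 2 ≠ 0 := by
    exact_mod_cast (by positivity : (0 : ℝ) < 1 + γ * ‖h‖ ^ 2).ne'
  suffices hc : (γ : ℂ) * ⟪h, detector γ h a⟫_ℂ
      = (γ : ℂ) * ⟪h, a⟫_ℂ / (1 + (γ : ℂ) * ((‖h‖ : ℂ)) ^ 2) by
    rw [hc, detector, sub_add_cancel]
  rw [detector, inner_sub_right, inner_smul_right, inner_self_eq_norm_sq_to_K,
    RCLike.ofReal_eq_complex_ofReal]
  field_simp
  ring

lemma inner_detector (γ : ℝ) (a h : H) :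
    ⟪a, detector γ h a⟫_ℂ = ((‖a‖ ^ 2 - γ * ‖⟪h, a⟫_ℂ‖ ^ 2 / (1 + γ * ‖h‖ ^ 2) : ℝ) : ℂ) := by
  rw [detector, inner_sub_right, inner_smul_right, inner_self_eq_norm_sq_to_K,
    ← inner_conj_symm a h, mul_div_right_comm, mul_assoc, RCLike.mul_conj,
    RCLike.ofReal_eq_complex_ofReal]
  push_cast
  ring

end

/-- Lemma 3 of the paper in full: the generalized Rayleigh quotient
`|⟪a,v⟫|² / (γ|⟪h,v⟫|² + ‖v‖²)` over nonzero `v` attains its greatest value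
`M = ‖a‖² − γ|⟪h,a⟫|²/(1+γ‖h‖²)` at the detector `v★ = a − (γ⟪h,a⟫/(1+γ‖h‖²))·h`. -/
theorem rayleigh_quotient_max {H : Type*} [NormedAddCommGroup H]
    [InnerProductSpace ℂ H] (a h : H) (ha : a ≠ 0) (γ : ℝ) (hγ : 0 ≤ γ) :
    IsGreatest {x : ℝ | ∃ v : H, v ≠ 0 ∧
        x = ‖⟪a, v⟫_ℂ‖ ^ 2 / (γ * ‖⟪h, v⟫_ℂ‖ ^ 2 + ‖v‖ ^ 2)}
      (‖a‖ ^ 2 - γ * ‖⟪h, a⟫_ℂ‖ ^ 2 / (1 + γ * ‖h‖ ^ 2))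
      ∧ (let vstar : H := a - ((γ : ℂ) * ⟪h, a⟫_ℂ / (1 + (γ : ℂ) * ((‖h‖ : ℂ)) ^ 2)) • h
         ‖⟪a, vstar⟫_ℂ‖ ^ 2 / (γ * ‖⟪h, vstar⟫_ℂ‖ ^ 2 + ‖vstar‖ ^ 2)
           = ‖a‖ ^ 2 - γ * ‖⟪h, a⟫_ℂ‖ ^ 2 / (1 + γ * ‖h‖ ^ 2)) := by
  have hsolve := detector_add_smul_inner hγ a h
  set v := detector γ h a
  have hv : v ≠ 0 := by
    intro hv
    simp [hv, eq_comm, ha] at hsolve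
  have hM : ‖a‖ ^ 2 - γ * ‖⟪h, a⟫_ℂ‖ ^ 2 / (1 + γ * ‖h‖ ^ 2)
      = γ * ‖⟪h, v⟫_ℂ‖ ^ 2 + ‖v‖ ^ 2 :=
    Complex.ofReal_injective <| by
      rw [← inner_detector, ← inner_add_smul_inner_self γ h v, hsolve]
  have hattained : ‖⟪a, v⟫_ℂ‖ ^ 2 / (γ * ‖⟪h, v⟫_ℂ‖ ^ 2 + ‖v‖ ^ 2)
      = γ * ‖⟪h, v⟫_ℂ‖ ^ 2 + ‖v‖ ^ 2 := by
    have hQ : 0 < γ * ‖⟪h, v⟫_ℂ‖ ^ 2 + ‖v‖ ^ 2 := by positivity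
    rw [inner_detector, hM, Complex.norm_real, Real.norm_of_nonneg hQ.le, sq,
      mul_div_cancel_right₀ _ hQ.ne']
  refine ⟨⟨⟨v, hv, (hattained.trans hM.symm).symm⟩, ?_⟩, hattained.trans hM.symm⟩
  rintro _ ⟨w, hw, rfl⟩
  rw [hM, div_le_iff₀ (by positivity), ← hsolve]
  exact norm_inner_add_smul_inner_sq_le hγ h v w
end

section
/- Let H be a complex inner product space, let a, h ∈ H with a ≠ 0, and let γ ≥ 0 be real. Then the supremum of |⟪a, v⟫|² / (γ·|⟪h, v⟫|² + ‖v‖²) over all nonzero v ∈ H equals the supremum of the same quantity over all nonzero v in the linear span of {a, h}. -/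
/-!
The orthogonal projection `w` of `v` onto `K = span {a, h}` has the same inner products with `a`
and `h` as `v`, and `‖w‖ ≤ ‖v‖`; so it leaves the numerator and the `γ`-term of the quotient
unchanged and does not increase the denominator. Hence every value over `H` is dominated by a
value over `K`, unless `w = 0`, where the quotient at `v` is `0`. That case is harmless because
both suprema are of nonnegative reals, whose `sSup` is nonnegative even for the empty set.
-/

open scoped InnerProductSpace

theorem Real.sSup_image_eq_of_dominated {α : Type*} {f : α → ℝ} {s t : Set α} (hts : t ⊆ s)
    (hf : ∀ x ∈ s, 0 ≤ f x) (hbdd : BddAbove (f '' s))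
    (hdom : ∀ x ∈ s, f x ≤ 0 ∨ ∃ y ∈ t, f x ≤ f y) :
    sSup (f '' s) = sSup (f '' t) := by
  have hnonneg : ∀ u ⊆ s, 0 ≤ sSup (f '' u) := fun u hu ↦
    Real.sSup_nonneg <| Set.forall_mem_image.2 fun x hx ↦ hf x (hu hx)
  refine le_antisymm (Real.sSup_le ?_ (hnonneg t hts)) (Real.sSup_le ?_ (hnonneg s le_rfl))
  · rintro _ ⟨x, hx, rfl⟩
    rcases hdom x hx with hx0 | ⟨y, hy, hxy⟩
    · exact hx0.trans (hnonneg t hts)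
    · exact hxy.trans (le_csSup (hbdd.mono (Set.image_mono hts)) ⟨y, hy, rfl⟩)
  · rintro _ ⟨x, hx, rfl⟩
    exact le_csSup hbdd ⟨x, hts hx, rfl⟩

section

variable {H : Type*} [NormedAddCommGroup H] [InnerProductSpace ℂ H]

theorem Submodule.inner_starProjection_right_of_mem {K : Submodule ℂ H}
    [K.HasOrthogonalProjection] {u : H} (hu : u ∈ K) (v : H) :
    ⟪u, K.starProjection v⟫_ℂ = ⟪u, v⟫_ℂ := by
  rw [← K.inner_starProjection_left_eq_right, K.starProjection_eq_self_iff.2 hu]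

noncomputable def rayleighQuotient (γ : ℝ) (a h v : H) : ℝ :=
  ‖⟪a, v⟫_ℂ‖ ^ 2 / (γ * ‖⟪h, v⟫_ℂ‖ ^ 2 + ‖v‖ ^ 2)

variable {γ : ℝ} {a h : H}

theorem rayleighQuotient_nonneg (hγ : 0 ≤ γ) (v : H) : 0 ≤ rayleighQuotient γ a h v := by
  unfold rayleighQuotient
  positivity

theorem rayleighQuotient_le_norm_sq (hγ : 0 ≤ γ) (v : H) :
    rayleighQuotient γ a h v ≤ ‖a‖ ^ 2 := by
  refine div_le_of_le_mul₀ (by positivity) (by positivity) ?_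
  calc ‖⟪a, v⟫_ℂ‖ ^ 2 ≤ (‖a‖ * ‖v‖) ^ 2 := by gcongr; exact norm_inner_le_norm a v
    _ ≤ ‖a‖ ^ 2 * (γ * ‖⟪h, v⟫_ℂ‖ ^ 2 + ‖v‖ ^ 2) := by
      rw [mul_pow]
      gcongr
      exact le_add_of_nonneg_left (by positivity)

theorem rayleighQuotient_le_of_inner_eq (hγ : 0 ≤ γ) {v w : H} (hw : w ≠ 0)
    (ha : ⟪a, v⟫_ℂ = ⟪a, w⟫_ℂ) (hh : ⟪h, v⟫_ℂ = ⟪h, w⟫_ℂ) (hwv : ‖w‖ ≤ ‖v‖) :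
    rayleighQuotient γ a h v ≤ rayleighQuotient γ a h w := by
  have : 0 < ‖w‖ := norm_pos_iff.2 hw
  unfold rayleighQuotient
  rw [ha, hh]
  gcongr

theorem rayleighQuotient_le_starProjection (hγ : 0 ≤ γ) {K : Submodule ℂ H}
    [K.HasOrthogonalProjection] (ha : a ∈ K) (hh : h ∈ K) (v : H) :
    rayleighQuotient γ a h v ≤ 0 ∨
      ∃ w ∈ K, w ≠ 0 ∧ rayleighQuotient γ a h v ≤ rayleighQuotient γ a h w := by
  by_cases hv : K.starProjection v = 0
  · have : ⟪a, v⟫_ℂ = 0 := by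
      rw [← K.inner_starProjection_right_of_mem ha, hv, inner_zero_right]
    exact .inl (by simp [rayleighQuotient, this])
  · exact .inr ⟨_, K.starProjection_apply_mem v, hv, rayleighQuotient_le_of_inner_eq hγ hv
      (K.inner_starProjection_right_of_mem ha v).symm
      (K.inner_starProjection_right_of_mem hh v).symm (K.norm_starProjection_apply_le v)⟩

end

theorem rayleigh_sup_subspace_reduction_general {H : Type*} [NormedAddCommGroup H]
    [InnerProductSpace ℂ H] (a h : H) (γ : ℝ) (hγ : 0 ≤ γ) :
    sSup {x : ℝ | ∃ v : H, v ≠ 0 ∧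
        x = ‖⟪a, v⟫_ℂ‖ ^ 2 / (γ * ‖⟪h, v⟫_ℂ‖ ^ 2 + ‖v‖ ^ 2)}
      = sSup {x : ℝ | ∃ v ∈ Submodule.span ℂ ({a, h} : Set H), v ≠ 0 ∧
        x = ‖⟪a, v⟫_ℂ‖ ^ 2 / (γ * ‖⟪h, v⟫_ℂ‖ ^ 2 + ‖v‖ ^ 2)} := by
  set K := Submodule.span ℂ ({a, h} : Set H)
  have : FiniteDimensional ℂ K := .span_of_finite ℂ (Set.toFinite _)
  set q := rayleighQuotient γ a h
  change sSup {x | ∃ v : H, v ≠ 0 ∧ x = q v} = sSup {x | ∃ v ∈ K, v ≠ 0 ∧ x = q v}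
  rw [show {x | ∃ v : H, v ≠ 0 ∧ x = q v} = q '' {v | v ≠ 0} by ext; simp [eq_comm],
    show {x | ∃ v ∈ K, v ≠ 0 ∧ x = q v} = q '' {v ∈ K | v ≠ 0} by
      ext; simp [eq_comm, and_assoc]]
  refine Real.sSup_image_eq_of_dominated (fun v hv ↦ hv.2)
    (fun v _ ↦ rayleighQuotient_nonneg hγ v)
    ⟨‖a‖ ^ 2, Set.forall_mem_image.2 fun v _ ↦ rayleighQuotient_le_norm_sq hγ v⟩ fun v _ ↦ ?_
  obtain hv | ⟨w, hwK, hw, hvw⟩ := rayleighQuotient_le_starProjection hγ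
    (Submodule.subset_span (by simp) : a ∈ K) (Submodule.subset_span (by simp) : h ∈ K) v
  exacts [.inl hv, .inr ⟨w, ⟨hwK, hw⟩, hvw⟩]

/-- Subspace-reduction step for the uplink detector optimization: the supremum of the
generalized Rayleigh quotient `|⟪a,v⟫|² / (γ|⟪h,v⟫|² + ‖v‖²)` over all nonzero `v`
equals the supremum over all nonzero `v` in the span of `{a, h}`. -/
theorem rayleigh_sup_subspace_reduction {H : Type*} [NormedAddCommGroup H]
    [InnerProductSpace ℂ H] (a h : H) (ha : a ≠ 0) (γ : ℝ) (hγ : 0 ≤ γ) :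
    sSup {x : ℝ | ∃ v : H, v ≠ 0 ∧
        x = ‖⟪a, v⟫_ℂ‖ ^ 2 / (γ * ‖⟪h, v⟫_ℂ‖ ^ 2 + ‖v‖ ^ 2)}
      = sSup {x : ℝ | ∃ v ∈ Submodule.span ℂ ({a, h} : Set H), v ≠ 0 ∧
        x = ‖⟪a, v⟫_ℂ‖ ^ 2 / (γ * ‖⟪h, v⟫_ℂ‖ ^ 2 + ‖v‖ ^ 2)} :=
  rayleigh_sup_subspace_reduction_general a h γ hγ
end
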